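/- Fix n ≥ 1. There exist δ > 0 and c > 0 such that for every correlation matrix C ∈ ℝ^{n×n} with ‖C − I_n‖_F < δ, setting ρ̄_* = (1/n)·tr(C^{1/2}) and ρ̄_c = (1/n)·tr(L), where L is the Cholesky factor of C, one has |(1 − ρ̄_c) − 2·(1 − ρ̄_*)| ≤ c·‖C − I_n‖_F³. In particular, the Cholesky distance to perfect correlation is, to first order, twice the OASIS distance: (1 − ρ̄_c)/(1 − ρ̄_*) = 2·(1 + O(‖C − I_n‖_F)). -/

import Mathlib

/-!
Write `λᵢ` for the eigenvalues of `C` and `ε = ‖C - 1‖_F`, so that `∑ (λᵢ - 1) = 0` and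
`∑ (λᵢ - 1)² = ε²`. The Taylor expansion of `√` at `1` then gives
`n - tr C^{1/2} = ε² / 8 + O(ε³)`.

For the Cholesky factor put `D = L - 1`. The rows of `L` are unit vectors, so
`‖D‖² = 2 (n - tr L)`, and `C - 1 = D + Dᵀ + D Dᵀ`. An a priori bound `‖D‖² ≤ 2ε²` comes from
the determinant: `∑ (1 - Lᵢᵢ) ≤ -∑ log Lᵢᵢ = -½ log det C = -½ ∑ log λᵢ ≤ ε²`. Since `D` is
triangular, `‖D + Dᵀ‖² = 2‖D‖² + 2 ∑ Dᵢᵢ²` with `0 ≤ -Dᵢᵢ ≤ ‖D‖²`, and the quadratic term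
`D Dᵀ` is `O(ε²)`; hence `ε² = 2‖D‖² + O(ε³)`, i.e. `n - tr L = ε² / 4 + O(ε³)`.
-/

open Matrix BigOperators

/-- Frobenius norm of a real square matrix. -/
noncomputable def frobNorm {n : ℕ} (A : Matrix (Fin n) (Fin n) ℝ) : ℝ :=
  Real.sqrt (∑ i, ∑ j, (A i j) ^ 2)

open scoped ComplexOrder in
/-- The square root of a positive semidefinite matrix (the definition of
`Matrix.PosSemidef.sqrt` in Mathlib of December 2024, since removed). -/
noncomputable def Matrix.PosSemidef.sqrt {n : Type*} {𝕜 : Type*} [Fintype n] [DecidableEq n]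
    [RCLike 𝕜] {A : Matrix n n 𝕜} (hA : A.PosSemidef) : Matrix n n 𝕜 :=
  hA.1.eigenvectorUnitary.1 * diagonal ((↑) ∘ (√·) ∘ hA.1.eigenvalues) *
    (star hA.1.eigenvectorUnitary : Matrix n n 𝕜)

open scoped Matrix.Norms.Frobenius ComplexOrder

namespace Real

theorem abs_one_sub_sqrt_add_sub_le {x : ℝ} (hx : 0 ≤ x) :
    |1 - √x + (x - 1) / 2 - (x - 1) ^ 2 / 8| ≤ |x - 1| ^ 3 := by
  obtain ⟨s, hs, rfl⟩ : ∃ s, 0 ≤ s ∧ s ^ 2 = x := ⟨√x, sqrt_nonneg x, sq_sqrt hx⟩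
  rw [sqrt_sq hs,
    show 1 - s + (s ^ 2 - 1) / 2 - (s ^ 2 - 1) ^ 2 / 8 = -((s - 1) ^ 3 * ((3 + s) / 8)) by ring,
    show s ^ 2 - 1 = (s - 1) * (s + 1) by ring, abs_neg, abs_mul, abs_mul, mul_pow, abs_pow,
    abs_of_nonneg (by positivity : 0 ≤ (3 + s) / 8), abs_of_nonneg (by positivity : 0 ≤ s + 1)]
  gcongr
  nlinarith

theorem neg_log_le_one_sub_add_two_mul_sq {x : ℝ} (hx : 1 / 2 ≤ x) :
    -log x ≤ 1 - x + 2 * (x - 1) ^ 2 := by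
  have hx0 : 0 < x := by linarith
  have hlog := one_sub_inv_le_log_of_pos hx0
  have hinv : x⁻¹ - 1 = 1 - x + (x - 1) ^ 2 / x := by field_simp; ring
  have hquot : (x - 1) ^ 2 / x ≤ 2 * (x - 1) ^ 2 := by
    rw [div_le_iff₀ hx0]; nlinarith [sq_nonneg (x - 1)]
  linarith

end Real

theorem abs_norm_add_sq_sub_norm_sq_le {E : Type*} [SeminormedAddCommGroup E] (x y : E) :
    |‖x + y‖ ^ 2 - ‖x‖ ^ 2| ≤ ‖y‖ * (2 * ‖x‖ + ‖y‖) := by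
  have h := abs_norm_sub_norm_le (x + y) x
  rw [add_sub_cancel_left] at h
  rw [sq_sub_sq, abs_mul, abs_of_nonneg (by positivity : 0 ≤ ‖x + y‖ + ‖x‖), mul_comm]
  exact mul_le_mul h (by linarith [norm_add_le x y]) (by positivity) (norm_nonneg y)

namespace Matrix

section Frobenius

variable {m n : Type*} [Fintype m] [Fintype n]

theorem frobenius_norm_sq_eq_sum (A : Matrix m n ℝ) : ‖A‖ ^ 2 = ∑ i, ∑ j, A i j ^ 2 := by
  rw [frobenius_norm_def, ← Real.sqrt_eq_rpow, Real.sq_sqrt (by positivity)]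
  simp

theorem trace_mul_transpose_self (A : Matrix m n ℝ) : (A * Aᵀ).trace = ‖A‖ ^ 2 := by
  rw [frobenius_norm_sq_eq_sum]
  simp [trace, mul_apply, sq]

end Frobenius

variable {ι : Type*} [Fintype ι] {L : Matrix ι ι ℝ}

theorem diag_le_one_of_diag_mul_transpose (hdiag : ∀ i, (L * Lᵀ) i i = 1) (i : ι) :
    L i i ≤ 1 := by
  have h : L i i ^ 2 ≤ (L * Lᵀ) i i := by
    simpa [mul_apply, sq] using Finset.single_le_sum (f := fun k => L i k ^ 2)
      (fun _ _ => sq_nonneg _) (Finset.mem_univ i)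
  rw [hdiag] at h
  nlinarith

section

variable [DecidableEq ι]

theorem norm_sub_one_sq_of_diag_mul_transpose (hdiag : ∀ i, (L * Lᵀ) i i = 1) :
    ‖L - 1‖ ^ 2 = 2 * ∑ i, (1 - L i i) := by
  rw [← trace_mul_transpose_self]
  simp only [transpose_sub, transpose_one, sub_mul, mul_sub, mul_one, one_mul, trace_sub,
    trace_transpose, trace_one]
  simp [trace, hdiag, Finset.sum_sub_distrib]
  ring

theorem PosSemidef.trace_sqrt {𝕜 : Type*} [RCLike 𝕜] {A : Matrix ι ι 𝕜} (hA : A.PosSemidef) :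
    hA.sqrt.trace = ∑ i, ((√(hA.1.eigenvalues i) : ℝ) : 𝕜) := by
  rw [PosSemidef.sqrt, trace_mul_cycle, Unitary.coe_star_mul_self, one_mul, trace_diagonal]
  rfl

theorem IsHermitian.trace_mul_self {𝕜 : Type*} [RCLike 𝕜] {A : Matrix ι ι 𝕜}
    (hA : A.IsHermitian) : (A * A).trace = ∑ i, ((hA.eigenvalues i ^ 2 : ℝ) : 𝕜) := by
  conv_lhs => rw [hA.spectral_theorem, ← map_mul, Unitary.conjStarAlgAut_apply, trace_mul_cycle,
    Unitary.coe_star_mul_self, one_mul, diagonal_mul_diagonal, trace_diagonal]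
  simp [sq]

theorem IsHermitian.sum_sq_eigenvalues_sub_one {A : Matrix ι ι ℝ} (hA : A.IsHermitian) :
    ∑ i, (hA.eigenvalues i - 1) ^ 2 = ‖A - 1‖ ^ 2 := by
  have hsymm : (A - 1)ᵀ = A - 1 := by
    rw [transpose_sub, transpose_one, ← conjTranspose_eq_transpose_of_trivial, hA.eq]
  have htr : A.trace = ∑ i, hA.eigenvalues i := by simp [hA.trace_eq_sum_eigenvalues]
  have htr_sq : (A * A).trace = ∑ i, hA.eigenvalues i ^ 2 := by simp [hA.trace_mul_self]
  have hexpand : ((A - 1) * (A - 1)).trace = (A * A).trace - 2 * A.trace + Fintype.card ι := by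
    simp only [sub_mul, mul_sub, mul_one, one_mul, trace_sub, trace_one]
    ring
  rw [← trace_mul_transpose_self, hsymm, hexpand, htr, htr_sq]
  simp [sub_sq, Finset.sum_add_distrib, Finset.sum_sub_distrib, Finset.mul_sum]

theorem IsHermitian.abs_eigenvalues_sub_one_le {A : Matrix ι ι ℝ} (hA : A.IsHermitian) (i : ι) :
    |hA.eigenvalues i - 1| ≤ ‖A - 1‖ := by
  have h : (hA.eigenvalues i - 1) ^ 2 ≤ ‖A - 1‖ ^ 2 :=
    hA.sum_sq_eigenvalues_sub_one ▸ Finset.single_le_sum (f := fun i => (hA.eigenvalues i - 1) ^ 2)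
      (fun _ _ => sq_nonneg _) (Finset.mem_univ i)
  simpa using sq_le_sq.mp h

theorem IsHermitian.sum_eigenvalues_sub_one {A : Matrix ι ι ℝ} (hA : A.IsHermitian)
    (hdiag : ∀ i, A i i = 1) : ∑ i, (hA.eigenvalues i - 1) = 0 := by
  have h := hA.trace_eq_sum_eigenvalues
  simp only [trace, diag, hdiag, RCLike.ofReal_real_eq_id, id] at h
  simp [Finset.sum_sub_distrib, ← h]

theorem PosSemidef.abs_card_sub_trace_sqrt_sub_le {A : Matrix ι ι ℝ} (hA : A.PosSemidef)
    (hdiag : ∀ i, A i i = 1) :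
    |(Fintype.card ι - hA.sqrt.trace) - ‖A - 1‖ ^ 2 / 8| ≤ ‖A - 1‖ ^ 3 := by
  set μ := hA.1.eigenvalues
  have hsplit : (Fintype.card ι - hA.sqrt.trace) - ‖A - 1‖ ^ 2 / 8
      = ∑ i, (1 - √(μ i) + (μ i - 1) / 2 - (μ i - 1) ^ 2 / 8) := by
    rw [Finset.sum_sub_distrib, Finset.sum_add_distrib, Finset.sum_sub_distrib, ← Finset.sum_div,
      ← Finset.sum_div, hA.1.sum_eigenvalues_sub_one hdiag, hA.1.sum_sq_eigenvalues_sub_one,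
      hA.trace_sqrt]
    simp [μ]
  calc |(Fintype.card ι - hA.sqrt.trace) - ‖A - 1‖ ^ 2 / 8|
      ≤ ∑ i, |μ i - 1| ^ 3 := by
        rw [hsplit]
        exact (Finset.abs_sum_le_sum_abs _ _).trans <| Finset.sum_le_sum fun i _ =>
          Real.abs_one_sub_sqrt_add_sub_le (hA.eigenvalues_nonneg i)
    _ ≤ ∑ i, ‖A - 1‖ * (μ i - 1) ^ 2 := by
        gcongr with i
        rw [pow_succ', ← sq_abs (μ i - 1)]
        gcongr
        exact hA.1.abs_eigenvalues_sub_one_le i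
    _ = ‖A - 1‖ ^ 3 := by
        rw [← Finset.mul_sum, hA.1.sum_sq_eigenvalues_sub_one]
        ring

theorem IsHermitian.neg_log_det_le {A : Matrix ι ι ℝ} (hA : A.IsHermitian)
    (hdiag : ∀ i, A i i = 1) (hsmall : ‖A - 1‖ ≤ 1 / 2) :
    -Real.log A.det ≤ 2 * ‖A - 1‖ ^ 2 := by
  have hμ (i : ι) : 1 / 2 ≤ hA.eigenvalues i := by
    linarith [(abs_le.mp (hA.abs_eigenvalues_sub_one_le i)).1]
  rw [hA.det_eq_prod_eigenvalues, ← hA.sum_sq_eigenvalues_sub_one, Finset.mul_sum]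
  simp only [RCLike.ofReal_real_eq_id, id]
  rw [Real.log_prod (fun i _ => by linarith [hμ i]), ← Finset.sum_neg_distrib]
  calc ∑ i, -Real.log (hA.eigenvalues i)
      ≤ ∑ i, (1 - hA.eigenvalues i + 2 * (hA.eigenvalues i - 1) ^ 2) :=
        Finset.sum_le_sum fun i _ => Real.neg_log_le_one_sub_add_two_mul_sq (hμ i)
    _ = ∑ i, 2 * (hA.eigenvalues i - 1) ^ 2 := by
        rw [Finset.sum_add_distrib, show ∑ i, (1 - hA.eigenvalues i) = -∑ i, (hA.eigenvalues i - 1)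
          by simp, hA.sum_eigenvalues_sub_one hdiag, neg_zero, zero_add]

end

section Triangular

variable [LinearOrder ι]

theorem IsLowerTriangular.trace_mul_self {D : Matrix ι ι ℝ} (hD : D.IsLowerTriangular) :
    (D * D).trace = ∑ i, D i i ^ 2 := by
  refine Finset.sum_congr rfl fun i _ => ?_
  rw [diag_apply, mul_apply, Finset.sum_eq_single i, sq]
  · intro k _ hki
    rcases hki.lt_or_gt with h | h
    · rw [hD (show OrderDual.toDual i < OrderDual.toDual k from h), mul_zero]
    · rw [hD (show OrderDual.toDual k < OrderDual.toDual i from h), zero_mul]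
  · simp

theorem IsLowerTriangular.norm_add_transpose_sq {D : Matrix ι ι ℝ} (hD : D.IsLowerTriangular) :
    ‖D + Dᵀ‖ ^ 2 = 2 * ‖D‖ ^ 2 + 2 * ∑ i, D i i ^ 2 := by
  rw [← trace_mul_transpose_self, ← trace_mul_transpose_self, ← hD.trace_mul_self]
  simp only [transpose_add, transpose_transpose, add_mul, mul_add, trace_add]
  rw [trace_mul_comm Dᵀ D, trace_mul_comm Dᵀ Dᵀ, ← transpose_mul, trace_transpose]
  ring

theorem IsLowerTriangular.abs_norm_sq_sub_le {D : Matrix ι ι ℝ} (hD : D.IsLowerTriangular) :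
    |‖D + Dᵀ + D * Dᵀ‖ ^ 2 - 2 * ‖D‖ ^ 2|
      ≤ 2 * ∑ i, D i i ^ 2 + ‖D‖ ^ 2 * (4 * ‖D‖ + ‖D‖ ^ 2) := by
  have hsum : ‖D + Dᵀ‖ ≤ 2 * ‖D‖ := by
    linarith [norm_add_le D Dᵀ, frobenius_norm_transpose D]
  have hprod : ‖D * Dᵀ‖ ≤ ‖D‖ ^ 2 := by
    simpa [sq, frobenius_norm_transpose] using frobenius_norm_mul D Dᵀ
  have hpert := abs_norm_add_sq_sub_norm_sq_le (D + Dᵀ) (D * Dᵀ)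
  rw [hD.norm_add_transpose_sq] at hpert
  calc |‖D + Dᵀ + D * Dᵀ‖ ^ 2 - 2 * ‖D‖ ^ 2|
      ≤ |‖D + Dᵀ + D * Dᵀ‖ ^ 2 - (2 * ‖D‖ ^ 2 + 2 * ∑ i, D i i ^ 2)|
        + 2 * ∑ i, D i i ^ 2 := by
        have h := abs_sub_le (‖D + Dᵀ + D * Dᵀ‖ ^ 2) (2 * ‖D‖ ^ 2 + 2 * ∑ i, D i i ^ 2)
          (2 * ‖D‖ ^ 2)
        rwa [add_sub_cancel_left, abs_of_nonneg (a := 2 * ∑ i, D i i ^ 2) (by positivity)] at h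
    _ ≤ ‖D * Dᵀ‖ * (2 * ‖D + Dᵀ‖ + ‖D * Dᵀ‖) + 2 * ∑ i, D i i ^ 2 := by gcongr
    _ ≤ ‖D‖ ^ 2 * (2 * (2 * ‖D‖) + ‖D‖ ^ 2) + 2 * ∑ i, D i i ^ 2 := by gcongr
    _ = 2 * ∑ i, D i i ^ 2 + ‖D‖ ^ 2 * (4 * ‖D‖ + ‖D‖ ^ 2) := by ring

theorem IsLowerTriangular.det_mul_transpose (hL : L.IsLowerTriangular) :
    (L * Lᵀ).det = (∏ i, L i i) ^ 2 := by
  rw [det_mul, det_transpose, det_of_isLowerTriangular L hL, sq]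

theorem IsLowerTriangular.two_mul_sum_one_sub_diag_le (hL : L.IsLowerTriangular)
    (hpos : ∀ i, 0 < L i i) : 2 * ∑ i, (1 - L i i) ≤ -Real.log (L * Lᵀ).det := by
  rw [hL.det_mul_transpose, Real.log_pow, Real.log_prod (fun i _ => (hpos i).ne'),
    Finset.mul_sum, ← neg_mul, Finset.mul_sum]
  refine Finset.sum_le_sum fun i _ => ?_
  push_cast
  linarith [Real.log_le_sub_one_of_pos (hpos i)]

theorem IsLowerTriangular.abs_card_sub_trace_sub_le (hL : L.IsLowerTriangular)
    (hpos : ∀ i, 0 < L i i) (hdiag : ∀ i, (L * Lᵀ) i i = 1) (hsmall : ‖L * Lᵀ - 1‖ ≤ 1 / 2) :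
    |(Fintype.card ι - L.trace) - ‖L * Lᵀ - 1‖ ^ 2 / 4| ≤ 5 * ‖L * Lᵀ - 1‖ ^ 3 := by
  set ε := ‖L * Lᵀ - 1‖
  set D := L - 1
  have hD : D.IsLowerTriangular := hL.sub blockTriangular_one
  have hLLt : (L * Lᵀ).IsHermitian := by
    simpa [conjTranspose_eq_transpose_of_trivial] using isHermitian_mul_conjTranspose_self L
  have hnormD : ‖D‖ ^ 2 = 2 * ∑ i, (1 - L i i) := norm_sub_one_sq_of_diag_mul_transpose hdiag
  have hnormD_le : ‖D‖ ^ 2 ≤ 2 * ε ^ 2 := hnormD ▸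
    (hL.two_mul_sum_one_sub_diag_le hpos).trans (hLLt.neg_log_det_le hdiag hsmall)
  have hnormD_le' : ‖D‖ ≤ 2 * ε := by nlinarith [norm_nonneg D, norm_nonneg (L * Lᵀ - 1)]
  have hdiagD : ∑ i, D i i ^ 2 ≤ ε ^ 4 := by
    have hnonneg (i : ι) : 0 ≤ 1 - L i i := by linarith [diag_le_one_of_diag_mul_transpose hdiag i]
    calc ∑ i, D i i ^ 2 = ∑ i, (1 - L i i) ^ 2 :=
          Finset.sum_congr rfl fun i _ => by simp [D]; ring
      _ ≤ (∑ i, (1 - L i i)) ^ 2 := Finset.sum_sq_le_sq_sum_of_nonneg fun i _ => hnonneg i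
      _ ≤ (ε ^ 2) ^ 2 := by gcongr; exacts [Finset.sum_nonneg fun i _ => hnonneg i, by linarith]
      _ = ε ^ 4 := by ring
  have hexpand : L * Lᵀ - 1 = D + Dᵀ + D * Dᵀ := by
    simp only [D, transpose_sub, transpose_one, sub_mul, mul_sub, mul_one, one_mul]
    abel
  have htrace : (Fintype.card ι : ℝ) - L.trace = ‖D‖ ^ 2 / 2 := by
    simp [hnormD, trace, Finset.sum_sub_distrib]
  have hpert := hD.abs_norm_sq_sub_le
  rw [← hexpand] at hpert
  rw [htrace, show ‖D‖ ^ 2 / 2 - ε ^ 2 / 4 = -(ε ^ 2 - 2 * ‖D‖ ^ 2) / 4 by ring, abs_div,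
    abs_neg, abs_of_pos (by norm_num : (0 : ℝ) < 4), div_le_iff₀ (by norm_num)]
  have hε : 0 ≤ ε := norm_nonneg _
  calc |ε ^ 2 - 2 * ‖D‖ ^ 2| ≤ 2 * ∑ i, D i i ^ 2 + ‖D‖ ^ 2 * (4 * ‖D‖ + ‖D‖ ^ 2) := hpert
    _ ≤ 2 * ε ^ 4 + (2 * ε ^ 2) * (4 * (2 * ε) + 2 * ε ^ 2) := by gcongr
    _ ≤ 5 * ε ^ 3 * 4 := by nlinarith [pow_nonneg hε 3]

end Triangular

end Matrix

theorem frobNorm_eq_norm {n : ℕ} (A : Matrix (Fin n) (Fin n) ℝ) : frobNorm A = ‖A‖ := by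
  rw [frobNorm, ← frobenius_norm_sq_eq_sum, Real.sqrt_sq (norm_nonneg A)]

/-- **Twice the proximity to perfect correlation.** For every fixed `n ≥ 1` there
are `δ, c > 0` such that for any correlation matrix `C` with `‖C − I‖_F < δ`, with
`ρ̄_* = (1/n)·tr(C^{1/2})` and `ρ̄_c = (1/n)·tr(L)` (where `L` is the Cholesky
factor of `C`), one has `|(1 − ρ̄_c) − 2(1 − ρ̄_*)| ≤ c·‖C − I‖_F³`. -/
theorem stmt_14 (n : ℕ) (hn : 1 ≤ n) :
    ∃ δ > (0 : ℝ), ∃ c > (0 : ℝ), ∀ C : Matrix (Fin n) (Fin n) ℝ,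
      ∀ hC : C.PosDef, (∀ i, C i i = 1) → frobNorm (C - 1) < δ →
      ∀ L : Matrix (Fin n) (Fin n) ℝ,
        (∀ i j : Fin n, i < j → L i j = 0) → (∀ i, 0 < L i i) → L * Lᵀ = C →
        |(1 - (1 / (n : ℝ)) * L.trace)
            - 2 * (1 - (1 / (n : ℝ)) * (hC.posSemidef.sqrt).trace)|
          ≤ c * frobNorm (C - 1) ^ 3 := by
  have hn' : (1 : ℝ) ≤ n := by exact_mod_cast hn
  have hn₀ : (0 : ℝ) < n := by linarith
  refine ⟨1 / 2, by norm_num, 7, by norm_num, fun C hC hdiag hsmall L hlow hpos hLC => ?_⟩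
  rw [frobNorm_eq_norm] at hsmall ⊢
  subst hLC
  have hcholesky := IsLowerTriangular.abs_card_sub_trace_sub_le (fun i j h => hlow i j h) hpos
    hdiag hsmall.le
  have hsqrt := hC.posSemidef.abs_card_sub_trace_sqrt_sub_le hdiag
  simp only [Fintype.card_fin] at hcholesky hsqrt
  rw [show (1 - 1 / (n : ℝ) * L.trace) - 2 * (1 - 1 / (n : ℝ) * hC.posSemidef.sqrt.trace)
      = (((n - L.trace) - ‖L * Lᵀ - 1‖ ^ 2 / 4)
        - 2 * ((n - hC.posSemidef.sqrt.trace) - ‖L * Lᵀ - 1‖ ^ 2 / 8)) / n by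
      field_simp; ring,
    abs_div, abs_of_pos hn₀, div_le_iff₀ hn₀]
  calc _ ≤ |(n - L.trace) - ‖L * Lᵀ - 1‖ ^ 2 / 4|
        + 2 * |(n - hC.posSemidef.sqrt.trace) - ‖L * Lᵀ - 1‖ ^ 2 / 8| :=
        (abs_sub _ _).trans_eq (by rw [abs_mul, abs_two])
    _ ≤ 7 * ‖L * Lᵀ - 1‖ ^ 3 := by linarith
    _ ≤ 7 * ‖L * Lᵀ - 1‖ ^ 3 * n := le_mul_of_one_le_right (by positivity) hn'
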